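/- arXiv:1711.09650 — 2 statements merged into one kernel-verified Lean document; each statement's English description precedes it below -/
import Mathlib

section
/- Let λ > 0, let ψ ∈ P^r satisfy Γ_λ(ψ) = L(1), and define e(t) = exp(−λ(t−t₀)) − ψ(t). Then for all w, v ∈ P^r with Γ_λ(v) = w, the L∞–L² stability estimate sup_{t∈I} |v(t)| ≤ C^{L²} · k^{1/2} · (∫_I w(t)² dt)^{1/2} holds, where C^{L²} = Υ(r, kλ) · sup_{t∈I} |e(t)/e(t₀)| + 1 and Υ(r, ϱ) = √(3/(2(2r+1)+ϱ)). -/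
open Polynomial MeasureTheory intervalIntegral

/-- The rescaled Legendre polynomials on `[t₀, t₁]`: `K i` has degree `i`,
`K i (t₁) = 1`, `K i (t₀) = (-1)^i`, and they are `L²(t₀,t₁)`-orthogonal with
`∫ K i ^ 2 = (t₁ - t₀)/(2 i + 1)`. -/
def IsLegendreBasis (t₀ t₁ : ℝ) (K : ℕ → Polynomial ℝ) : Prop :=
  (∀ i, (K i).natDegree = i) ∧ (∀ i, (K i).eval t₁ = 1) ∧
  (∀ i, (K i).eval t₀ = (-1 : ℝ) ^ i) ∧
  (∀ i j, (∫ t in t₀..t₁, (K i).eval t * (K j).eval t) =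
    if i = j then (t₁ - t₀) / (2 * (i : ℝ) + 1) else 0)

/-- The lifting operator `L(z) = (z/k) ∑_{i=0}^r (-1)^i (2i+1) K_i`. -/
noncomputable def Lop (t₀ t₁ : ℝ) (r : ℕ) (K : ℕ → Polynomial ℝ) (z : ℝ) : Polynomial ℝ :=
  Polynomial.C (z / (t₁ - t₀)) *
    ∑ i ∈ Finset.range (r + 1), Polynomial.C ((-1 : ℝ) ^ i * (2 * (i : ℝ) + 1)) * K i

/-- The endpoint lifting operator `L̂(z) = (z/k) ∑_{i=0}^r (2i+1) K_i`. -/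
noncomputable def LopE (t₀ t₁ : ℝ) (r : ℕ) (K : ℕ → Polynomial ℝ) (z : ℝ) : Polynomial ℝ :=
  Polynomial.C (z / (t₁ - t₀)) *
    ∑ i ∈ Finset.range (r + 1), Polynomial.C (2 * (i : ℝ) + 1) * K i

/-- The scalar dG operator `Γ_λ(v) = v' + L(v(t₀)) + λ v`. -/
noncomputable def Gam (t₀ t₁ : ℝ) (r : ℕ) (K : ℕ → Polynomial ℝ) (lam : ℝ)
    (v : Polynomial ℝ) : Polynomial ℝ :=
  Polynomial.derivative v + Lop t₀ t₁ r K (v.eval t₀) + Polynomial.C lam * v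

/-- The dG error function `e(t) = exp(-λ (t - t₀)) - ψ(t)`. -/
noncomputable def errF (t₀ lam : ℝ) (ψ : Polynomial ℝ) (t : ℝ) : ℝ :=
  Real.exp (-lam * (t - t₀)) - ψ.eval t

/-- `Υ(r, ϱ) = √(3 / (2 (2 r + 1) + ϱ))`. -/
noncomputable def Upsilon (r : ℕ) (ρ : ℝ) : ℝ :=
  Real.sqrt (3 / (2 * (2 * (r : ℝ) + 1) + ρ))

/-- The stability constant `C^{L²} = Υ(r, kλ) ⬝ sup_{t ∈ I} |e(t)/e(t₀)| + 1`. -/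
noncomputable def CL2 (t₀ t₁ : ℝ) (r : ℕ) (lam : ℝ) (ψ : Polynomial ℝ) : ℝ :=
  Upsilon r ((t₁ - t₀) * lam) *
    (⨆ t ∈ Set.Ioc t₀ t₁, |errF t₀ lam ψ t / errF t₀ lam ψ t₀|) + 1

/-!
Write `Γ_λ v = p + λ v` with `p = v' + L(v(t₀))`. Testing `p` against `v` gives
`∫ p v = (v(t₁)² + v(t₀)²)/2 ≥ 0`; testing it against `K_r`, which is orthogonal to `v'` and pairs
with `L(1)` to `(-1)^r`, gives `(2r+1) v(t₀)² ≤ k ‖p‖²` by Cauchy–Schwarz. Expanding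
`‖w‖² = ‖p‖² + 2λ ∫ p v + λ² ‖v‖²` then bounds `|v(t₀)|` by `Υ(r, kλ) √k ‖w‖`.

The function `φ = v - (v(t₀)/e(t₀)) e` solves `φ' + λ φ = w` with `φ(t₀) = 0`, the lifting terms
cancelling, so `φ(t) = ∫_{t₀}^t e^{-λ(t-s)} w(s) ds`, which is at most `√k ‖w‖` by Cauchy–Schwarz.
Here `e(t₀) ≠ 0` because `e(t₀) = 0` would force `ψ' + λ ψ = 0`, i.e. `ψ = 0`.
-/

open Set

theorem sq_intervalIntegral_mul_le {f g : ℝ → ℝ} (hf : Continuous f) (hg : Continuous g)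
    {a b : ℝ} (hab : a ≤ b) :
    (∫ s in a..b, f s * g s) ^ 2 ≤ (∫ s in a..b, f s ^ 2) * ∫ s in a..b, g s ^ 2 := by
  have hquad : ∀ x : ℝ, 0 ≤ (∫ s in a..b, f s ^ 2) * (x * x) + 2 * (∫ s in a..b, f s * g s) * x
      + ∫ s in a..b, g s ^ 2 := fun x => by
    have hexpand : (fun s => (x * f s + g s) ^ 2)
        = fun s => x ^ 2 * f s ^ 2 + (2 * x * (f s * g s) + g s ^ 2) := by
      funext s; ring
    have hnonneg : 0 ≤ ∫ s in a..b, (x * f s + g s) ^ 2 :=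
      intervalIntegral.integral_nonneg hab fun s _ => sq_nonneg _
    rw [hexpand, intervalIntegral.integral_add, intervalIntegral.integral_add,
      intervalIntegral.integral_const_mul, intervalIntegral.integral_const_mul] at hnonneg
    · linarith
    all_goals exact Continuous.intervalIntegrable (by fun_prop) _ _
  have hdisc := discrim_le_zero hquad
  rw [discrim] at hdisc
  nlinarith

theorem eq_exp_mul_add_integral {φ g : ℝ → ℝ} {lam : ℝ}
    (hφ : ∀ s, HasDerivAt φ (g s - lam * φ s) s) (hg : Continuous g) (a t : ℝ) :
    φ t = Real.exp (-lam * (t - a)) * φ a + ∫ s in a..t, Real.exp (-lam * (t - s)) * g s := by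
  have hderiv : ∀ s, HasDerivAt (fun u => Real.exp (-lam * (t - u)) * φ u)
      (Real.exp (-lam * (t - s)) * g s) s := fun s =>
    ((((hasDerivAt_id' s).const_sub t).const_mul (-lam)).exp.mul (hφ s)).congr_deriv (by ring)
  rw [intervalIntegral.integral_eq_sub_of_hasDerivAt (fun s _ => hderiv s)
    (Continuous.intervalIntegrable (by fun_prop) _ _)]
  simp

theorem abs_integral_exp_mul_le {lam : ℝ} (hlam : 0 ≤ lam) {g : ℝ → ℝ} (hg : Continuous g)
    {a b t : ℝ} (hat : a ≤ t) (htb : t ≤ b) :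
    |∫ s in a..t, Real.exp (-lam * (t - s)) * g s| ≤ √(b - a) * √(∫ s in a..b, g s ^ 2) := by
  have hexp : ∫ s in a..t, Real.exp (-lam * (t - s)) ^ 2 ≤ b - a := by
    calc ∫ s in a..t, Real.exp (-lam * (t - s)) ^ 2 ≤ ∫ _ in a..t, (1 : ℝ) := by
          refine intervalIntegral.integral_mono_on hat
            (Continuous.intervalIntegrable (by fun_prop) _ _) intervalIntegrable_const
            fun s hs => pow_le_one₀ (Real.exp_pos _).le (Real.exp_le_one_iff.2 ?_)
          nlinarith [hs.2]
      _ ≤ b - a := by simp; linarith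
  have hg2 : ∫ s in a..t, g s ^ 2 ≤ ∫ s in a..b, g s ^ 2 :=
    intervalIntegral.integral_mono_interval le_rfl hat htb
      (Filter.Eventually.of_forall fun s => sq_nonneg (g s))
      (Continuous.intervalIntegrable (by fun_prop) _ _)
  rw [← Real.sqrt_mul (by linarith), ← Real.sqrt_sq_eq_abs]
  refine Real.sqrt_le_sqrt ((sq_intervalIntegral_mul_le (by fun_prop) hg hat).trans ?_)
  exact mul_le_mul hexp hg2 (intervalIntegral.integral_nonneg hat fun s _ => sq_nonneg _)
    (by linarith)

theorem le_biSup_Ioc {f : ℝ → ℝ} {a b t : ℝ} (hf : ContinuousOn f (Icc a b)) (ht : t ∈ Ioc a b) :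
    f t ≤ ⨆ s ∈ Ioc a b, f s :=
  le_ciSup₂ (f := fun s _ => f s) ((isCompact_Icc.bddAbove_image hf).mono <|
    iUnion_subset fun s => by
      rintro _ ⟨hs, rfl⟩
      exact ⟨s, Ioc_subset_Icc_self hs, rfl⟩) t ht

namespace Polynomial

noncomputable def l2Inner (a b : ℝ) : ℝ[X] →ₗ[ℝ] ℝ[X] →ₗ[ℝ] ℝ :=
  LinearMap.mk₂ ℝ (fun p q => ∫ s in a..b, p.eval s * q.eval s)
    (fun p₁ p₂ q => by
      simp only [eval_add, add_mul]
      exact intervalIntegral.integral_add (Continuous.intervalIntegrable (by fun_prop) _ _)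
        (Continuous.intervalIntegrable (by fun_prop) _ _))
    (fun c p q => by
      simp only [eval_smul, smul_eq_mul, mul_assoc]
      exact intervalIntegral.integral_const_mul _ _)
    (fun p q₁ q₂ => by
      simp only [eval_add, mul_add]
      exact intervalIntegral.integral_add (Continuous.intervalIntegrable (by fun_prop) _ _)
        (Continuous.intervalIntegrable (by fun_prop) _ _))
    (fun c p q => by
      simp only [eval_smul, smul_eq_mul, mul_left_comm _ c]
      exact intervalIntegral.integral_const_mul _ _)

@[simp]
theorem l2Inner_apply (a b : ℝ) (p q : ℝ[X]) :
    l2Inner a b p q = ∫ s in a..b, p.eval s * q.eval s :=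
  rfl

theorem l2Inner_comm (a b : ℝ) (p q : ℝ[X]) : l2Inner a b p q = l2Inner a b q p := by
  simp only [l2Inner_apply, mul_comm]

theorem l2Inner_self_nonneg {a b : ℝ} (hab : a ≤ b) (p : ℝ[X]) : 0 ≤ l2Inner a b p p :=
  intervalIntegral.integral_nonneg hab fun _ _ => mul_self_nonneg _

theorem l2Inner_derivative_self (a b : ℝ) (p : ℝ[X]) :
    l2Inner a b (derivative p) p = (p.eval b ^ 2 - p.eval a ^ 2) / 2 := by
  have hftc : ∫ s in a..b, 2 * ((derivative p).eval s * p.eval s) = p.eval b ^ 2 - p.eval a ^ 2 :=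
    intervalIntegral.integral_eq_sub_of_hasDerivAt
      (fun s _ => ((p.hasDerivAt s).pow 2).congr_deriv (by ring))
      (Continuous.intervalIntegrable (by fun_prop) _ _)
  rw [intervalIntegral.integral_const_mul] at hftc
  rw [l2Inner_apply]
  linarith

theorem degree_derivative_lt_of_natDegree_le {R : Type*} [Semiring R] {p : R[X]} {n : ℕ}
    (hp : p.natDegree ≤ n) :
    (derivative p).degree < n := by
  rcases eq_or_ne p 0 with rfl | hp0
  · simp
  · exact (degree_derivative_lt hp0).trans_le (degree_le_of_natDegree_le hp)

theorem eq_zero_of_derivative_add_C_mul_eq_zero {R : Type*} [Ring R] [NoZeroDivisors R]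
    {p : R[X]} {lam : R} (hlam : lam ≠ 0)
    (h : derivative p + C lam * p = 0) : p = 0 := by
  by_contra hp
  have hlt := degree_derivative_lt hp
  rw [eq_neg_of_add_eq_zero_left h, degree_neg, degree_C_mul hlam] at hlt
  exact lt_irrefl _ hlt

end Polynomial

theorem Lop_eq_smul (t₀ t₁ : ℝ) (r : ℕ) (K : ℕ → ℝ[X]) (z : ℝ) :
    Lop t₀ t₁ r K z = z • Lop t₀ t₁ r K 1 := by
  rw [Lop, Lop, smul_eq_C_mul, ← mul_assoc, ← C_mul, mul_one_div]

namespace IsLegendreBasis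

variable {t₀ t₁ : ℝ} {K : ℕ → ℝ[X]} (hK : IsLegendreBasis t₀ t₁ K)
include hK

noncomputable def toSequence : Polynomial.Sequence ℝ where
  elems' := K
  degree_eq' i :=
    (degree_eq_iff_natDegree_eq fun h => by simpa [h] using hK.2.1 i).2 (hK.1 i)

theorem isUnit_leadingCoeff (i : ℕ) : IsUnit (K i).leadingCoeff :=
  (leadingCoeff_ne_zero.2 (hK.toSequence.ne_zero i)).isUnit

theorem span_image_Iic (m : ℕ) : Submodule.span ℝ (K '' Iic m) = degreeLE ℝ m :=
  hK.toSequence.span_degreeLE fun i _ => hK.isUnit_leadingCoeff i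

theorem span_image_Iio (m : ℕ) : Submodule.span ℝ (K '' Iio m) = degreeLT ℝ m :=
  hK.toSequence.span_degreeLT fun i _ => hK.isUnit_leadingCoeff i

theorem l2Inner_legendre (i j : ℕ) :
    l2Inner t₀ t₁ (K i) (K j) = if i = j then (t₁ - t₀) / (2 * (i : ℝ) + 1) else 0 :=
  hK.2.2.2 i j

theorem l2Inner_legendre_eq_zero (r : ℕ) {q : ℝ[X]} (hq : q.degree < r) :
    l2Inner t₀ t₁ (K r) q = 0 := by
  have hmem : q ∈ Submodule.span ℝ (K '' Iio r) := by
    rwa [hK.span_image_Iio, mem_degreeLT]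
  refine LinearMap.eqOn_span (f := l2Inner t₀ t₁ (K r)) (g := 0) ?_ hmem
  rintro _ ⟨i, hi, rfl⟩
  rw [hK.l2Inner_legendre, if_neg (ne_of_gt hi), LinearMap.zero_apply]

theorem l2Inner_lop_one_legendre (ht : t₀ < t₁) {r i : ℕ} (hi : i ≤ r) :
    l2Inner t₀ t₁ (Lop t₀ t₁ r K 1) (K i) = (-1) ^ i := by
  have hLop : Lop t₀ t₁ r K 1
      = (1 / (t₁ - t₀)) • ∑ j ∈ Finset.range (r + 1), ((-1) ^ j * (2 * (j : ℝ) + 1)) • K j := by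
    simp only [Lop, smul_eq_C_mul, Finset.mul_sum]
  simp only [hLop, map_smul, map_sum, LinearMap.smul_apply, LinearMap.sum_apply,
    hK.l2Inner_legendre, smul_eq_mul, mul_ite, mul_zero,
    Finset.sum_ite_eq', Finset.mem_range, Nat.lt_succ_of_le hi, if_true]
  have hk : t₁ - t₀ ≠ 0 := sub_ne_zero.2 ht.ne'
  have hi' : 2 * (i : ℝ) + 1 ≠ 0 := by positivity
  field_simp

theorem l2Inner_lop (ht : t₀ < t₁) {r : ℕ} (z : ℝ) {q : ℝ[X]} (hq : q.natDegree ≤ r) :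
    l2Inner t₀ t₁ (Lop t₀ t₁ r K z) q = z * q.eval t₀ := by
  have hmem : q ∈ Submodule.span ℝ (K '' Iic r) := by
    rwa [hK.span_image_Iic, mem_degreeLE, ← natDegree_le_iff_degree_le]
  have hone : l2Inner t₀ t₁ (Lop t₀ t₁ r K 1) q = leval t₀ q := by
    refine LinearMap.eqOn_span (f := l2Inner t₀ t₁ (Lop t₀ t₁ r K 1)) (g := leval t₀) ?_ hmem
    rintro _ ⟨i, hi, rfl⟩
    rw [hK.l2Inner_lop_one_legendre ht hi, leval_apply, hK.2.2.1]
  rw [Lop_eq_smul, map_smul, LinearMap.smul_apply, hone, leval_apply, smul_eq_mul]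

end IsLegendreBasis

section Stability

variable {t₀ t₁ lam : ℝ} {r : ℕ} {K : ℕ → ℝ[X]}

theorem IsLegendreBasis.sq_eval_left_mul_le_l2Inner (hK : IsLegendreBasis t₀ t₁ K) (ht : t₀ < t₁)
    (hlam : 0 ≤ lam) {v : ℝ[X]} (hv : v.natDegree ≤ r) :
    v.eval t₀ ^ 2 * (2 * r + 1 + (t₁ - t₀) * lam)
      ≤ (t₁ - t₀) * l2Inner t₀ t₁ (Gam t₀ t₁ r K lam v) (Gam t₀ t₁ r K lam v) := by
  set p := derivative v + Lop t₀ t₁ r K (v.eval t₀)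
  have hGam : Gam t₀ t₁ r K lam v = p + lam • v := by rw [Gam, smul_eq_C_mul]
  have hpv : l2Inner t₀ t₁ p v = (v.eval t₁ ^ 2 + v.eval t₀ ^ 2) / 2 := by
    rw [map_add, LinearMap.add_apply, l2Inner_derivative_self, hK.l2Inner_lop ht _ hv]
    ring
  have hpK : l2Inner t₀ t₁ p (K r) = v.eval t₀ * (-1) ^ r := by
    rw [map_add, LinearMap.add_apply, l2Inner_comm,
      hK.l2Inner_legendre_eq_zero r (degree_derivative_lt_of_natDegree_le hv), zero_add,
      Lop_eq_smul, map_smul, LinearMap.smul_apply, hK.l2Inner_lop_one_legendre ht le_rfl,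
      smul_eq_mul]
  have hCS : v.eval t₀ ^ 2 * (2 * r + 1) ≤ (t₁ - t₀) * l2Inner t₀ t₁ p p := by
    have h : l2Inner t₀ t₁ p (K r) ^ 2 ≤ l2Inner t₀ t₁ p p * l2Inner t₀ t₁ (K r) (K r) := by
      simpa only [l2Inner_apply, sq] using
        sq_intervalIntegral_mul_le p.continuous (K r).continuous ht.le
    rw [hpK, mul_pow, ← pow_mul, mul_comm r, pow_mul, neg_one_sq, one_pow, mul_one,
      hK.l2Inner_legendre, if_pos rfl, mul_div_assoc', le_div_iff₀ (by positivity)] at h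
    linarith
  have hexpand : l2Inner t₀ t₁ (p + lam • v) (p + lam • v)
      = l2Inner t₀ t₁ p p + 2 * lam * l2Inner t₀ t₁ p v + lam ^ 2 * l2Inner t₀ t₁ v v := by
    simp only [map_add, map_smul, LinearMap.add_apply, LinearMap.smul_apply, smul_eq_mul,
      l2Inner_comm _ _ v p]
    ring
  have hk : 0 ≤ t₁ - t₀ := sub_nonneg.2 ht.le
  rw [hGam, hexpand, hpv]
  nlinarith [mul_nonneg (mul_nonneg hk hlam) (sq_nonneg (v.eval t₁)),
    mul_nonneg (mul_nonneg hk (sq_nonneg lam)) (l2Inner_self_nonneg ht.le v)]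

theorem IsLegendreBasis.abs_eval_left_le_upsilon (hK : IsLegendreBasis t₀ t₁ K) (ht : t₀ < t₁)
    (hlam : 0 ≤ lam) {v : ℝ[X]} (hv : v.natDegree ≤ r) :
    |v.eval t₀| ≤ Upsilon r ((t₁ - t₀) * lam) *
      (√(t₁ - t₀) * √(∫ s in t₀..t₁, (Gam t₀ t₁ r K lam v).eval s ^ 2)) := by
  have hjump := hK.sq_eval_left_mul_le_l2Inner ht hlam hv
  simp only [l2Inner_apply, ← sq] at hjump
  have hk : 0 ≤ t₁ - t₀ := sub_nonneg.2 ht.le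
  have hρ : 0 ≤ (t₁ - t₀) * lam := mul_nonneg hk hlam
  rw [Upsilon, ← Real.sqrt_mul hk, ← Real.sqrt_mul (by positivity), ← Real.sqrt_sq_eq_abs]
  refine Real.sqrt_le_sqrt ?_
  rw [div_mul_eq_mul_div, le_div_iff₀ (by positivity)]
  -- `3 / (2 (2r+1) + ρ) ≥ 1 / (2r+1+ρ)`, so the bound of `sq_eval_left_mul_le_l2Inner` suffices
  nlinarith [mul_nonneg (sq_nonneg (v.eval t₀)) (add_nonneg (Nat.cast_nonneg (α := ℝ) r) hρ)]

theorem errF_left (ψ : ℝ[X]) : errF t₀ lam ψ t₀ = 1 - ψ.eval t₀ := by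
  simp [errF]

theorem errF_left_ne_zero (hlam : lam ≠ 0) {ψ : ℝ[X]}
    (hψ : Gam t₀ t₁ r K lam ψ = Lop t₀ t₁ r K 1) : errF t₀ lam ψ t₀ ≠ 0 := by
  rw [errF_left, sub_ne_zero]
  intro hψ₀
  rw [Gam, ← hψ₀, add_right_comm, add_eq_right] at hψ
  rw [eq_zero_of_derivative_add_C_mul_eq_zero hlam hψ, eval_zero] at hψ₀
  exact one_ne_zero hψ₀

theorem hasDerivAt_errF (ψ : ℝ[X]) (s : ℝ) :
    HasDerivAt (errF t₀ lam ψ) (-lam * Real.exp (-lam * (s - t₀)) - (derivative ψ).eval s) s :=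
  (((((hasDerivAt_id s).sub_const t₀).const_mul (-lam)).exp).sub (ψ.hasDerivAt s)).congr_deriv
    (by simp [mul_comm])

theorem eval_sub_mul_errF_eq_integral {ψ v w : ℝ[X]} (hψ : Gam t₀ t₁ r K lam ψ = Lop t₀ t₁ r K 1)
    (he₀ : errF t₀ lam ψ t₀ ≠ 0) (hvw : Gam t₀ t₁ r K lam v = w) (t : ℝ) :
    v.eval t - v.eval t₀ / errF t₀ lam ψ t₀ * errF t₀ lam ψ t
      = ∫ s in t₀..t, Real.exp (-lam * (t - s)) * w.eval s := by
  set c := v.eval t₀ / errF t₀ lam ψ t₀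
  have hc : c * (1 - ψ.eval t₀) = v.eval t₀ := by rw [← errF_left]; exact div_mul_cancel₀ _ he₀
  have hφ : ∀ s, HasDerivAt (fun u => v.eval u - c * errF t₀ lam ψ u)
      (w.eval s - lam * (v.eval s - c * errF t₀ lam ψ s)) s := fun s => by
    have hv_s := congrArg (eval s) hvw
    have hψ_s := congrArg (eval s) hψ
    rw [Gam, Lop_eq_smul] at hv_s hψ_s
    simp only [eval_add, eval_smul, eval_mul, eval_C, smul_eq_mul] at hv_s hψ_s
    refine ((v.hasDerivAt s).sub ((hasDerivAt_errF ψ s).const_mul c)).congr_deriv ?_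
    rw [errF]
    linear_combination hv_s + c * hψ_s + (Lop t₀ t₁ r K 1).eval s * hc
  have h := eq_exp_mul_add_integral hφ w.continuous t₀ t
  rwa [div_mul_cancel₀ _ he₀, sub_self, mul_zero, zero_add] at h

end Stability

theorem stmt_13_general (t₀ t₁ : ℝ) (ht : t₀ < t₁) (r : ℕ) (K : ℕ → Polynomial ℝ)
    (hK : IsLegendreBasis t₀ t₁ K) (lam : ℝ) (hlam : 0 < lam)
    (ψ : Polynomial ℝ) (hψ : Gam t₀ t₁ r K lam ψ = Lop t₀ t₁ r K 1) :
    ∀ w v : Polynomial ℝ, w.natDegree ≤ r → v.natDegree ≤ r →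
      Gam t₀ t₁ r K lam v = w →
      ∀ t ∈ Set.Ioc t₀ t₁,
        |v.eval t| ≤ CL2 t₀ t₁ r lam ψ * Real.sqrt (t₁ - t₀) *
          Real.sqrt (∫ s in t₀..t₁, (w.eval s) ^ 2) := by
  intro w v _ hv hvw t htI
  set e := errF t₀ lam ψ
  have he₀ : e t₀ ≠ 0 := errF_left_ne_zero hlam.ne' hψ
  set I := ∫ s in t₀..t, Real.exp (-lam * (t - s)) * w.eval s
  set W := √(t₁ - t₀) * √(∫ s in t₀..t₁, w.eval s ^ 2) with hW
  have hrep : v.eval t = v.eval t₀ * (e t / e t₀) + I := by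
    linear_combination eval_sub_mul_errF_eq_integral hψ he₀ hvw t
  have hjump : |v.eval t₀| ≤ Upsilon r ((t₁ - t₀) * lam) * W := by
    have h := hK.abs_eval_left_le_upsilon ht hlam.le hv
    rwa [hvw] at h
  have hsup : |e t / e t₀| ≤ ⨆ s ∈ Ioc t₀ t₁, |e s / e t₀| :=
    le_biSup_Ioc (f := fun s => |e s / e t₀|) (by unfold e errF; fun_prop) htI
  have hconv : |I| ≤ W := abs_integral_exp_mul_le hlam.le w.continuous htI.1.le htI.2
  calc |v.eval t| ≤ |v.eval t₀| * |e t / e t₀| + |I| := by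
        rw [hrep, ← abs_mul]; exact abs_add_le _ _
    _ ≤ Upsilon r ((t₁ - t₀) * lam) * W * (⨆ s ∈ Ioc t₀ t₁, |e s / e t₀|) + W :=
        add_le_add (mul_le_mul hjump hsup (abs_nonneg _) ((abs_nonneg _).trans hjump)) hconv
    _ = CL2 t₀ t₁ r lam ψ * √(t₁ - t₀) * √(∫ s in t₀..t₁, w.eval s ^ 2) := by
        rw [CL2, hW]; ring

/-- `L^∞`–`L²` stability of `(Γ_λ)⁻¹`:
`sup_I |v| ≤ C^{L²} k^{1/2} ‖w‖_{L²(I)}` whenever `Γ_λ(v) = w`. -/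
theorem stmt_13 (t₀ t₁ : ℝ) (ht : t₀ < t₁) (r : ℕ) (K : ℕ → Polynomial ℝ)
    (hK : IsLegendreBasis t₀ t₁ K) (lam : ℝ) (hlam : 0 < lam)
    (ψ : Polynomial ℝ) (hψdeg : ψ.natDegree ≤ r)
    (hψ : Gam t₀ t₁ r K lam ψ = Lop t₀ t₁ r K 1) :
    ∀ w v : Polynomial ℝ, w.natDegree ≤ r → v.natDegree ≤ r →
      Gam t₀ t₁ r K lam v = w →
      ∀ t ∈ Set.Ioc t₀ t₁,
        |v.eval t| ≤ CL2 t₀ t₁ r lam ψ * Real.sqrt (t₁ - t₀) *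
          Real.sqrt (∫ s in t₀..t₁, (w.eval s) ^ 2) :=
  stmt_13_general t₀ t₁ ht r K hK lam hlam ψ hψ
end

section
/- Let λ > 0, let ψ ∈ P^r satisfy Γ_λ(ψ) = L(1), and define e(t) = exp(−λ(t−t₀)) − ψ(t). Then sup_{t∈I} |e(t)/e(t₀)| ≤ 2 − exp(−λk). Consequently, the constant C^{L²} = Υ(r, kλ) · sup_{t∈I} |e(t)/e(t₀)| + 1 satisfies 1 ≤ C^{L²} ≤ (2 − exp(−λk)) Υ(r, kλ) + 1, where Υ(r, ϱ) = √(3/(2(2r+1)+ϱ)). -/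
/-!
Write `c = e(t₀) = 1 - ψ(t₀)`. Since `L` is linear, the dG equation reads `ψ' + λ ψ = c L(1)`, so
`e' = -λ e - c L(1)`. Testing against `K₀, …, K_r` and integrating by parts shows that
`L(1) = G'` for `G = ((-1)^r / 2) (K_{r+1} - K_r)`, so `G(t₀) = -1`; and `|G| ≤ 1` on `I` because
`|K_i| ≤ 1` there, which follows from the Legendre equation `((t - t₀)(t₁ - t) K_i')' = -i(i+1) K_i`
via Sonin's function `i(i+1) K_i² + (t - t₀)(t₁ - t) K_i'²`. Now `d = e + c G` solves
`d' = λ (c G - d)` with `d(t₀) = 0`, hence `|d(t)| ≤ |c| (1 - e^{-λ (t - t₀)})`, and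
`|e(t)| ≤ |d(t)| + |c| ≤ (2 - e^{-λ k}) |c|`. The bounds on `C^{L²}` follow as `Υ ≥ 0`.
-/

open Polynomial MeasureTheory intervalIntegral

namespace Polynomial

theorem intervalIntegrable_eval_mul_eval (p q : ℝ[X]) (a b : ℝ) :
    IntervalIntegrable (fun t => p.eval t * q.eval t) volume a b :=
  (p.continuous.mul q.continuous).intervalIntegrable a b

theorem integral_derivative_eval_mul_eval (p q : ℝ[X]) (a b : ℝ) :
    ∫ t in a..b, (derivative p).eval t * q.eval t =
      p.eval b * q.eval b - p.eval a * q.eval a -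
        ∫ t in a..b, p.eval t * (derivative q).eval t := by
  rw [← integral_deriv_mul_eq_sub (fun t _ => p.hasDerivAt t) (fun t _ => q.hasDerivAt t)
    (p.derivative.continuous.intervalIntegrable a b)
    (q.derivative.continuous.intervalIntegrable a b),
    integral_add (intervalIntegrable_eval_mul_eval _ _ a b)
      (intervalIntegrable_eval_mul_eval _ _ a b)]
  ring

theorem integral_eval_sub_mul_eval (p q r : ℝ[X]) (a b : ℝ) :
    ∫ t in a..b, (p - q).eval t * r.eval t =
      (∫ t in a..b, p.eval t * r.eval t) - ∫ t in a..b, q.eval t * r.eval t := by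
  simp only [eval_sub, sub_mul]
  exact integral_sub (intervalIntegrable_eval_mul_eval _ _ a b)
    (intervalIntegrable_eval_mul_eval _ _ a b)

theorem integral_eval_C_mul_mul_eval (c : ℝ) (p q : ℝ[X]) (a b : ℝ) :
    ∫ t in a..b, (C c * p).eval t * q.eval t = c * ∫ t in a..b, p.eval t * q.eval t := by
  simp only [eval_mul, eval_C, mul_assoc, intervalIntegral.integral_const_mul]

theorem integral_eval_sum_mul_eval (s : Finset ℕ) (c : ℕ → ℝ) (P : ℕ → ℝ[X]) (q : ℝ[X])
    (a b : ℝ) :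
    ∫ t in a..b, (∑ j ∈ s, C (c j) * P j).eval t * q.eval t =
      ∑ j ∈ s, c j * ∫ t in a..b, (P j).eval t * q.eval t := by
  simp only [eval_finsetSum, Finset.sum_mul]
  rw [integral_finsetSum fun j _ => intervalIntegrable_eval_mul_eval _ _ a b]
  simp only [integral_eval_C_mul_mul_eval]

end Polynomial

noncomputable def legendreWeight (t₀ t₁ : ℝ) : ℝ[X] := (X - C t₀) * (C t₁ - X)

section LegendreWeight

variable {t₀ t₁ : ℝ}

theorem legendreWeight_eq (t₀ t₁ : ℝ) :
    legendreWeight t₀ t₁ = -X ^ 2 + C (t₀ + t₁) * X - C (t₀ * t₁) := by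
  simp only [legendreWeight, C_add, C_mul]
  ring

theorem derivative_legendreWeight (t₀ t₁ : ℝ) :
    derivative (legendreWeight t₀ t₁) = C (t₀ + t₁) - 2 * X := by
  simp [legendreWeight_eq]
  ring

theorem eval_legendreWeight_nonneg {u : ℝ} (hu : u ∈ Set.Icc t₀ t₁) :
    0 ≤ (legendreWeight t₀ t₁).eval u := by
  simpa [legendreWeight] using mul_nonneg (sub_nonneg.mpr hu.1) (sub_nonneg.mpr hu.2)

theorem natDegree_derivative_legendreWeight_mul_derivative_le (p : ℝ[X]) :
    (derivative (legendreWeight t₀ t₁ * derivative p)).natDegree ≤ p.natDegree := by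
  by_cases hp : p.natDegree = 0
  · simp [derivative_of_natDegree_zero hp]
  have hW : (legendreWeight t₀ t₁).natDegree ≤ 2 := by
    unfold legendreWeight
    compute_degree
  have := natDegree_derivative_le p
  have := natDegree_derivative_le (legendreWeight t₀ t₁ * derivative p)
  have := natDegree_mul_le (p := legendreWeight t₀ t₁) (q := derivative p)
  omega

theorem coeff_derivative_legendreWeight_mul_derivative {p : ℝ[X]} {n : ℕ}
    (hp : p.natDegree ≤ n) :
    (derivative (legendreWeight t₀ t₁ * derivative p)).coeff n = -(n * (n + 1)) * p.coeff n := by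
  have h₁ : p.coeff (n + 1) = 0 := coeff_eq_zero_of_natDegree_lt (by omega)
  have h₂ : p.coeff (n + 1 + 1) = 0 := coeff_eq_zero_of_natDegree_lt (by omega)
  have hW : legendreWeight t₀ t₁ * derivative p = -(derivative p * X ^ 2) +
      C (t₀ + t₁) * (derivative p * X) - C (t₀ * t₁) * derivative p := by
    rw [legendreWeight_eq]
    ring
  rw [coeff_derivative, hW, coeff_sub, coeff_add, coeff_neg, coeff_C_mul, coeff_C_mul,
    coeff_mul_X, coeff_mul_X_pow']
  simp only [coeff_derivative, h₁, h₂]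
  cases n with
  | zero => simp
  | succ m =>
    simp
    ring

/-- Integrate by parts twice: the boundary terms vanish with `legendreWeight` at `t₀` and `t₁`. -/
theorem integral_derivative_legendreWeight_mul_derivative_mul_comm (p q : ℝ[X]) :
    ∫ t in t₀..t₁, (derivative (legendreWeight t₀ t₁ * derivative p)).eval t * q.eval t =
      ∫ t in t₀..t₁, (derivative (legendreWeight t₀ t₁ * derivative q)).eval t * p.eval t := by
  have hW₀ : (legendreWeight t₀ t₁).eval t₀ = 0 := by simp [legendreWeight]
  have hW₁ : (legendreWeight t₀ t₁).eval t₁ = 0 := by simp [legendreWeight]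
  rw [integral_derivative_eval_mul_eval, integral_derivative_eval_mul_eval]
  simp only [eval_mul, hW₀, hW₁, zero_mul, zero_sub]
  congr 1
  exact intervalIntegral.integral_congr fun t _ => by ring

theorem eval_le_max_of_derivative_eq {V Q : ℝ[X]}
    (hV : derivative V = (2 * X - C (t₀ + t₁)) * Q ^ 2) {u : ℝ} (hu : u ∈ Set.Icc t₀ t₁) :
    V.eval u ≤ max (V.eval t₀) (V.eval t₁) := by
  have hV' : ∀ x, deriv (fun y => V.eval y) x = (2 * x - (t₀ + t₁)) * Q.eval x ^ 2 := by
    simp [Polynomial.deriv, hV]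
  rcases le_total u ((t₀ + t₁) / 2) with hm | hm
  · have hanti : AntitoneOn (fun x => V.eval x) (Set.Icc t₀ ((t₀ + t₁) / 2)) :=
      antitoneOn_of_deriv_nonpos (convex_Icc _ _) V.continuous.continuousOn
        V.differentiable.differentiableOn fun x hx => by
          rw [interior_Icc] at hx
          rw [hV']
          exact mul_nonpos_of_nonpos_of_nonneg (by linarith [hx.2]) (sq_nonneg _)
    exact le_max_of_le_left (hanti ⟨le_rfl, by linarith [hu.1, hu.2]⟩ ⟨hu.1, hm⟩ hu.1)
  · have hmono : MonotoneOn (fun x => V.eval x) (Set.Icc ((t₀ + t₁) / 2) t₁) :=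
      monotoneOn_of_deriv_nonneg (convex_Icc _ _) V.continuous.continuousOn
        V.differentiable.differentiableOn fun x hx => by
          rw [interior_Icc] at hx
          rw [hV']
          exact mul_nonneg (by linarith [hx.1]) (sq_nonneg _)
    exact le_max_of_le_right (hmono ⟨hm, hu.2⟩ ⟨by linarith [hu.1, hu.2], le_rfl⟩ hu.2)

/-- Sonin's function `V = N p² + legendreWeight * p'²` has `V' = (2X - t₀ - t₁) p'²` and
dominates `N p²` on `[t₀, t₁]`. -/
theorem abs_eval_le_one_of_derivative_legendreWeight_mul_derivative_eq {p : ℝ[X]} {N : ℝ}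
    (hN : 0 < N) (hp : derivative (legendreWeight t₀ t₁ * derivative p) = -(C N * p))
    (h₀ : |p.eval t₀| ≤ 1) (h₁ : |p.eval t₁| ≤ 1) {u : ℝ} (hu : u ∈ Set.Icc t₀ t₁) :
    |p.eval u| ≤ 1 := by
  set V := C N * p ^ 2 + legendreWeight t₀ t₁ * derivative p ^ 2
  have hV : derivative V = (2 * X - C (t₀ + t₁)) * derivative p ^ 2 := by
    rw [derivative_mul, derivative_legendreWeight] at hp
    simp only [V, derivative_add, derivative_mul, derivative_pow, derivative_C,
      derivative_legendreWeight]
    simp only [Nat.cast_ofNat, C_ofNat] at hp ⊢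
    linear_combination (2 * derivative p) * hp
  have hW₀ : (legendreWeight t₀ t₁).eval t₀ = 0 := by simp [legendreWeight]
  have hW₁ : (legendreWeight t₀ t₁).eval t₁ = 0 := by simp [legendreWeight]
  have hVmax : V.eval u ≤ N := by
    refine (eval_le_max_of_derivative_eq hV hu).trans (max_le ?_ ?_)
    · simpa [V, hW₀] using mul_le_of_le_one_right hN.le ((sq_le_one_iff_abs_le_one _).mpr h₀)
    · simpa [V, hW₁] using mul_le_of_le_one_right hN.le ((sq_le_one_iff_abs_le_one _).mpr h₁)
  have hVu : N * p.eval u ^ 2 ≤ V.eval u := by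
    simpa [V] using mul_nonneg (eval_legendreWeight_nonneg hu) (sq_nonneg ((derivative p).eval u))
  rw [← sq_le_one_iff_abs_le_one]
  nlinarith

end LegendreWeight

namespace IsLegendreBasis

variable {t₀ t₁ : ℝ} {K : ℕ → ℝ[X]}

theorem coeff_self_ne_zero (hK : IsLegendreBasis t₀ t₁ K) (i : ℕ) : (K i).coeff i ≠ 0 := by
  have hKi : K i ≠ 0 := fun h => by simpa [h] using hK.2.1 i
  simpa [leadingCoeff, hK.1 i] using leadingCoeff_ne_zero.mpr hKi

theorem exists_eq_sum (hK : IsLegendreBasis t₀ t₁ K) {n : ℕ} {q : ℝ[X]} (hq : q.natDegree ≤ n) :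
    ∃ c : ℕ → ℝ, q = ∑ j ∈ Finset.range (n + 1), C (c j) * K j := by
  induction n generalizing q with
  | zero =>
    refine ⟨fun _ => q.coeff 0 / (K 0).coeff 0, ?_⟩
    rw [Finset.sum_range_one]
    conv_rhs => arg 2; rw [eq_C_of_natDegree_eq_zero (hK.1 0)]
    rw [← C_mul, div_mul_cancel₀ _ (hK.coeff_self_ne_zero 0), ← eq_C_of_natDegree_le_zero hq]
  | succ m ih =>
    set a := q.coeff (m + 1) / (K (m + 1)).coeff (m + 1)
    have hlow : (q - C a * K (m + 1)).natDegree ≤ m := by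
      refine natDegree_le_pred (n := m + 1) ?_ ?_
      · exact (natDegree_sub_le _ _).trans
          (max_le hq ((natDegree_C_mul_le _ _).trans (hK.1 _).le))
      · rw [coeff_sub, coeff_C_mul, div_mul_cancel₀ _ (hK.coeff_self_ne_zero _), sub_self]
    obtain ⟨c, hc⟩ := ih hlow
    refine ⟨Function.update c (m + 1) a, ?_⟩
    rw [Finset.sum_range_succ, Function.update_self,
      Finset.sum_congr rfl fun j hj => by
        rw [Function.update_of_ne (by simp at hj; omega)], ← hc, sub_add_cancel]

theorem integral_sum_mul (hK : IsLegendreBasis t₀ t₁ K) (s : Finset ℕ) (c : ℕ → ℝ) (i : ℕ) :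
    ∫ t in t₀..t₁, (∑ j ∈ s, C (c j) * K j).eval t * (K i).eval t =
      if i ∈ s then c i * ((t₁ - t₀) / (2 * i + 1)) else 0 := by
  simp only [integral_eval_sum_mul_eval, hK.2.2.2, mul_ite, mul_zero, Finset.sum_ite_eq']

theorem integral_mul_eq_zero_of_natDegree_lt (hK : IsLegendreBasis t₀ t₁ K) {q : ℝ[X]} {i : ℕ}
    (hi : q.natDegree < i) : ∫ t in t₀..t₁, q.eval t * (K i).eval t = 0 := by
  obtain ⟨c, hc⟩ := hK.exists_eq_sum (le_refl q.natDegree)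
  rw [hc, hK.integral_sum_mul, if_neg (by simp; omega)]

theorem integral_mul_derivative_eq_zero (hK : IsLegendreBasis t₀ t₁ K) {p : ℝ[X]} {i : ℕ}
    (hp : p.natDegree ≤ i) : ∫ t in t₀..t₁, (K i).eval t * (derivative p).eval t = 0 := by
  by_cases hp₀ : p.natDegree = 0
  · simp [derivative_of_natDegree_zero hp₀]
  · simp_rw [mul_comm ((K i).eval _)]
    exact hK.integral_mul_eq_zero_of_natDegree_lt ((natDegree_derivative_lt hp₀).trans_le hp)

theorem eq_of_forall_integral_mul_eq (hK : IsLegendreBasis t₀ t₁ K) (ht : t₀ ≠ t₁)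
    {p q : ℝ[X]} {n : ℕ} (hpq : (p - q).natDegree ≤ n)
    (h : ∀ j ≤ n, ∫ t in t₀..t₁, p.eval t * (K j).eval t = ∫ t in t₀..t₁, q.eval t * (K j).eval t) :
    p = q := by
  obtain ⟨c, hc⟩ := hK.exists_eq_sum hpq
  have hc₀ : ∀ j ∈ Finset.range (n + 1), c j = 0 := fun j hj => by
    have hj' := h j (by simpa [Nat.lt_succ_iff] using hj)
    rw [← sub_eq_zero, ← integral_eval_sub_mul_eval, hc, hK.integral_sum_mul, if_pos hj] at hj'
    have : (t₁ - t₀) / (2 * j + 1) ≠ 0 := div_ne_zero (sub_ne_zero.mpr ht.symm) (by positivity)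
    simpa [this] using hj'
  rw [← sub_eq_zero, hc]
  exact Finset.sum_eq_zero fun j hj => by simp [hc₀ j hj]

theorem derivative_legendreWeight_mul_derivative (hK : IsLegendreBasis t₀ t₁ K) (ht : t₀ ≠ t₁)
    (i : ℕ) :
    derivative (legendreWeight t₀ t₁ * derivative (K i)) = -(C ((i : ℝ) * (i + 1)) * K i) := by
  rcases Nat.eq_zero_or_pos i with rfl | hi
  · simp [derivative_of_natDegree_zero (hK.1 0)]
  refine hK.eq_of_forall_integral_mul_eq ht (n := i - 1) ?_ fun j hj => ?_
  · refine natDegree_le_pred ?_ ?_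
    · refine (natDegree_sub_le _ _).trans (max_le ?_ ?_)
      · exact (natDegree_derivative_legendreWeight_mul_derivative_le _).trans (hK.1 i).le
      · rw [natDegree_neg]
        exact (natDegree_C_mul_le _ _).trans (hK.1 i).le
    · rw [coeff_sub, coeff_derivative_legendreWeight_mul_derivative (hK.1 i).le, coeff_neg,
        coeff_C_mul]
      ring
  · have hlow : (derivative (legendreWeight t₀ t₁ * derivative (K j))).natDegree < i :=
      (natDegree_derivative_legendreWeight_mul_derivative_le _).trans_lt (by rw [hK.1 j]; omega)
    rw [integral_derivative_legendreWeight_mul_derivative_mul_comm,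
      hK.integral_mul_eq_zero_of_natDegree_lt hlow, ← neg_mul, ← C_neg,
      integral_eval_C_mul_mul_eval, hK.2.2.2, if_neg (by omega), mul_zero]

theorem abs_eval_le_one (hK : IsLegendreBasis t₀ t₁ K) (ht : t₀ < t₁) (i : ℕ) {u : ℝ}
    (hu : u ∈ Set.Icc t₀ t₁) : |(K i).eval u| ≤ 1 := by
  rcases Nat.eq_zero_or_pos i with rfl | hi
  · have hK₁ := hK.2.1 0
    rw [eq_C_of_natDegree_eq_zero (hK.1 0), eval_C] at hK₁ ⊢
    rw [hK₁, abs_one]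
  refine abs_eval_le_one_of_derivative_legendreWeight_mul_derivative_eq (by positivity)
    (hK.derivative_legendreWeight_mul_derivative ht.ne i) ?_ ?_ hu
  · simp [hK.2.2.1]
  · simp [hK.2.1]

theorem integral_Lop_one_mul (hK : IsLegendreBasis t₀ t₁ K) (ht : t₀ ≠ t₁) {r j : ℕ}
    (hj : j ≤ r) : ∫ t in t₀..t₁, (Lop t₀ t₁ r K 1).eval t * (K j).eval t = (-1) ^ j := by
  rw [Lop, integral_eval_C_mul_mul_eval,
    hK.integral_sum_mul (c := fun i => (-1) ^ i * (2 * (i : ℝ) + 1)), if_pos (by simp; omega)]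
  have : t₁ - t₀ ≠ 0 := sub_ne_zero.mpr ht.symm
  field_simp

theorem Lop_one_eq_derivative (hK : IsLegendreBasis t₀ t₁ K) (ht : t₀ ≠ t₁) (r : ℕ) :
    Lop t₀ t₁ r K 1 = derivative (C ((-1) ^ r / 2) * (K (r + 1) - K r)) := by
  have hdeg : (K (r + 1) - K r).natDegree ≤ r + 1 :=
    (natDegree_sub_le _ _).trans (max_le (hK.1 _).le (by rw [hK.1]; omega))
  refine hK.eq_of_forall_integral_mul_eq ht (n := r) ?_ fun j hj => ?_
  · refine (natDegree_sub_le _ _).trans (max_le ?_ ?_)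
    · refine (natDegree_C_mul_le _ _).trans (natDegree_sum_le_of_forall_le _ _ fun i hi => ?_)
      exact (natDegree_C_mul_le _ _).trans (by rw [hK.1]; simp at hi; omega)
    · rw [derivative_C_mul]
      refine (natDegree_C_mul_le _ _).trans ((natDegree_derivative_le _).trans ?_)
      omega
  · rw [hK.integral_Lop_one_mul ht hj, derivative_C_mul, integral_eval_C_mul_mul_eval,
      integral_derivative_eval_mul_eval, integral_eval_sub_mul_eval,
      hK.integral_mul_derivative_eq_zero (by rw [hK.1]; omega),
      hK.integral_mul_derivative_eq_zero (by rw [hK.1]; omega)]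
    simp only [eval_sub, hK.2.1, hK.2.2.1, pow_succ]
    linear_combination (-(-1 : ℝ) ^ j) * pow_mul_pow_eq_one r (by norm_num : (-1 : ℝ) * -1 = 1)

theorem exists_derivative_eq_Lop_one (hK : IsLegendreBasis t₀ t₁ K) (ht : t₀ < t₁) (r : ℕ) :
    ∃ G : ℝ[X], derivative G = Lop t₀ t₁ r K 1 ∧ G.eval t₀ = -1 ∧
      ∀ u ∈ Set.Icc t₀ t₁, |G.eval u| ≤ 1 := by
  refine ⟨_, (hK.Lop_one_eq_derivative ht.ne r).symm, ?_, fun u hu => ?_⟩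
  · simp only [eval_mul, eval_C, eval_sub, hK.2.2.1, pow_succ]
    linear_combination -pow_mul_pow_eq_one r (by norm_num : (-1 : ℝ) * -1 = 1)
  · rw [eval_mul, eval_C, abs_mul, abs_div, abs_pow, abs_neg, abs_one, one_pow, abs_two]
    have := (abs_sub _ _).trans
      (add_le_add (hK.abs_eval_le_one ht (r + 1) hu) (hK.abs_eval_le_one ht r hu))
    rw [← eval_sub] at this
    linarith

end IsLegendreBasis

/-- Compare `e^{λ (t - a)} f(t)` with `M (e^{λ (t - a)} - 1)`. -/
theorem abs_le_mul_one_sub_exp_of_hasDerivAt {f g : ℝ → ℝ} {lam M a b : ℝ} (hlam : 0 ≤ lam)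
    (hf : ∀ u, HasDerivAt f (lam * (g u - f u)) u) (hg : ∀ u ∈ Set.Icc a b, |g u| ≤ M)
    (ha : f a = 0) {t : ℝ} (ht : t ∈ Set.Icc a b) :
    |f t| ≤ M * (1 - Real.exp (-lam * (t - a))) := by
  have hexp : ∀ u, HasDerivAt (fun u => Real.exp (lam * (u - a)))
      (Real.exp (lam * (u - a)) * lam) u := fun u => by
    simpa using (((hasDerivAt_id u).sub_const a).const_mul lam).exp
  have hD : ∀ u, HasDerivAt (fun u => Real.exp (lam * (u - a)) * f u)
      (Real.exp (lam * (u - a)) * lam * g u) u := fun u =>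
    ((hexp u).mul (hf u)).congr_deriv (by ring)
  have hB : ∀ u, HasDerivAt (fun u => M * (Real.exp (lam * (u - a)) - 1))
      (M * (Real.exp (lam * (u - a)) * lam)) u := fun u => ((hexp u).sub_const 1).const_mul M
  have hbound := image_norm_le_of_norm_deriv_right_le_deriv_boundary
    (fun u _ => (hD u).continuousAt.continuousWithinAt) (fun u _ => (hD u).hasDerivWithinAt)
    (by simp [ha]) hB (fun u hu => ?_) ht
  · have hpos := Real.exp_pos (lam * (t - a))
    have hinv : Real.exp (-lam * (t - a)) * Real.exp (lam * (t - a)) = 1 := by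
      rw [← Real.exp_add]; ring_nf; exact Real.exp_zero
    rw [Real.norm_eq_abs, abs_mul, abs_of_pos hpos] at hbound
    calc |f t| = Real.exp (-lam * (t - a)) * (Real.exp (lam * (t - a)) * |f t|) := by
          rw [← mul_assoc, hinv, one_mul]
      _ ≤ Real.exp (-lam * (t - a)) * (M * (Real.exp (lam * (t - a)) - 1)) := by gcongr
      _ = M * (1 - Real.exp (-lam * (t - a))) := by linear_combination M * hinv
  · rw [Real.norm_eq_abs, abs_mul, abs_mul, abs_of_pos (Real.exp_pos _), abs_of_nonneg hlam]
    have := hg u (Set.Ico_subset_Icc_self hu)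
    calc _ ≤ Real.exp (lam * (u - a)) * lam * M := by gcongr
      _ = _ := by ring

theorem Lop_eq_C_mul (t₀ t₁ : ℝ) (r : ℕ) (K : ℕ → ℝ[X]) (z : ℝ) :
    Lop t₀ t₁ r K z = C z * Lop t₀ t₁ r K 1 := by
  rw [Lop, Lop, ← mul_assoc, ← C_mul, mul_one_div]

section ErrorFunction

variable {t₀ t₁ lam : ℝ} {r : ℕ} {K : ℕ → ℝ[X]} {ψ : ℝ[X]}

theorem errF_self : errF t₀ lam ψ t₀ = 1 - ψ.eval t₀ := by
  simp [errF]

theorem hasDerivAt_errF_s15 (hψ : Gam t₀ t₁ r K lam ψ = Lop t₀ t₁ r K 1) (u : ℝ) :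
    HasDerivAt (errF t₀ lam ψ)
      (-lam * errF t₀ lam ψ u - errF t₀ lam ψ t₀ * (Lop t₀ t₁ r K 1).eval u) u := by
  have hψ' : derivative ψ = C (1 - ψ.eval t₀) * Lop t₀ t₁ r K 1 - C lam * ψ := by
    rw [Gam, Lop_eq_C_mul] at hψ
    rw [C_sub, C_1]
    linear_combination hψ
  have hexp : HasDerivAt (fun v => Real.exp (-lam * (v - t₀)))
      (Real.exp (-lam * (u - t₀)) * -lam) u := by
    simpa using (((hasDerivAt_id u).sub_const t₀).const_mul (-lam)).exp
  refine (hexp.sub (ψ.hasDerivAt u)).congr_deriv ?_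
  rw [hψ', errF_self]
  simp only [errF, eval_sub, eval_mul, eval_C]
  ring

theorem abs_errF_le (ht : t₀ < t₁) (hK : IsLegendreBasis t₀ t₁ K) (hlam : 0 ≤ lam)
    (hψ : Gam t₀ t₁ r K lam ψ = Lop t₀ t₁ r K 1) {t : ℝ} (htI : t ∈ Set.Icc t₀ t₁) :
    |errF t₀ lam ψ t| ≤ (2 - Real.exp (-lam * (t₁ - t₀))) * |errF t₀ lam ψ t₀| := by
  obtain ⟨G, hG, hG₀, hG_le⟩ := hK.exists_derivative_eq_Lop_one ht r
  set c := errF t₀ lam ψ t₀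
  -- `e + c G` relaxes towards `c G`, since `(c G)' = c L(1)` cancels the forcing term.
  have hd : ∀ u, HasDerivAt (fun u => errF t₀ lam ψ u + c * G.eval u)
      (lam * (c * G.eval u - (errF t₀ lam ψ u + c * G.eval u))) u := fun u =>
    ((hasDerivAt_errF_s15 hψ u).add ((G.hasDerivAt u).const_mul c)).congr_deriv
      (by rw [hG]; ring)
  have hcG : ∀ u ∈ Set.Icc t₀ t₁, |c * G.eval u| ≤ |c| := fun u hu => by
    simpa [abs_mul] using mul_le_mul_of_nonneg_left (hG_le u hu) (abs_nonneg c)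
  have hrelax := abs_le_mul_one_sub_exp_of_hasDerivAt hlam hd hcG
    (by simp only [hG₀, c]; ring) htI
  have hexp : Real.exp (-lam * (t₁ - t₀)) ≤ Real.exp (-lam * (t - t₀)) :=
    Real.exp_le_exp.mpr (by nlinarith [htI.2])
  calc |errF t₀ lam ψ t|
      = |(errF t₀ lam ψ t + c * G.eval t) - c * G.eval t| := by ring_nf
    _ ≤ |errF t₀ lam ψ t + c * G.eval t| + |c * G.eval t| := abs_sub _ _
    _ ≤ |c| * (1 - Real.exp (-lam * (t - t₀))) + |c| := add_le_add hrelax (hcG t htI)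
    _ ≤ (2 - Real.exp (-lam * (t₁ - t₀))) * |c| := by nlinarith [abs_nonneg c]

end ErrorFunction

theorem stmt_15_general (t₀ t₁ : ℝ) (ht : t₀ < t₁) (r : ℕ) (K : ℕ → Polynomial ℝ)
    (hK : IsLegendreBasis t₀ t₁ K) (lam : ℝ) (hlam : 0 < lam)
    (ψ : Polynomial ℝ)
    (hψ : Gam t₀ t₁ r K lam ψ = Lop t₀ t₁ r K 1) :
    (⨆ t ∈ Set.Ioc t₀ t₁, |errF t₀ lam ψ t / errF t₀ lam ψ t₀|)
      ≤ 2 - Real.exp (-lam * (t₁ - t₀)) ∧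
    1 ≤ CL2 t₀ t₁ r lam ψ ∧
    CL2 t₀ t₁ r lam ψ
      ≤ (2 - Real.exp (-lam * (t₁ - t₀))) * Upsilon r ((t₁ - t₀) * lam) + 1 := by
  have hB : 0 ≤ 2 - Real.exp (-lam * (t₁ - t₀)) := by
    have : Real.exp (-lam * (t₁ - t₀)) ≤ 1 := Real.exp_le_one_iff.mpr (by nlinarith)
    linarith
  have hsup : (⨆ t ∈ Set.Ioc t₀ t₁, |errF t₀ lam ψ t / errF t₀ lam ψ t₀|)
      ≤ 2 - Real.exp (-lam * (t₁ - t₀)) := by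
    refine Real.iSup_le (fun t => Real.iSup_le (fun htI => ?_) hB) hB
    rcases eq_or_ne (errF t₀ lam ψ t₀) 0 with h₀ | h₀
    · simpa [h₀] using hB
    · rw [abs_div, div_le_iff₀ (abs_pos.mpr h₀)]
      exact abs_errF_le ht hK hlam.le hψ (Set.Ioc_subset_Icc_self htI)
  have hsup₀ : 0 ≤ ⨆ t ∈ Set.Ioc t₀ t₁, |errF t₀ lam ψ t / errF t₀ lam ψ t₀| :=
    Real.iSup_nonneg fun t => Real.iSup_nonneg fun _ => abs_nonneg _
  have hΥ : 0 ≤ Upsilon r ((t₁ - t₀) * lam) := Real.sqrt_nonneg _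
  refine ⟨hsup, ?_, ?_⟩
  · simpa [CL2] using mul_nonneg hΥ hsup₀
  · rw [CL2, mul_comm (2 - _)]
    gcongr

/-- Uniform bound `sup_I |e/e(t₀)| ≤ 2 - exp(-λ k)`, and hence
`1 ≤ C^{L²} ≤ (2 - exp(-λ k)) Υ(r, kλ) + 1`. -/
theorem stmt_15 (t₀ t₁ : ℝ) (ht : t₀ < t₁) (r : ℕ) (K : ℕ → Polynomial ℝ)
    (hK : IsLegendreBasis t₀ t₁ K) (lam : ℝ) (hlam : 0 < lam)
    (ψ : Polynomial ℝ) (hψdeg : ψ.natDegree ≤ r)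
    (hψ : Gam t₀ t₁ r K lam ψ = Lop t₀ t₁ r K 1) :
    (⨆ t ∈ Set.Ioc t₀ t₁, |errF t₀ lam ψ t / errF t₀ lam ψ t₀|)
      ≤ 2 - Real.exp (-lam * (t₁ - t₀)) ∧
    1 ≤ CL2 t₀ t₁ r lam ψ ∧
    CL2 t₀ t₁ r lam ψ
      ≤ (2 - Real.exp (-lam * (t₁ - t₀))) * Upsilon r ((t₁ - t₀) * lam) + 1 :=
  stmt_15_general t₀ t₁ ht r K hK lam hlam ψ hψ
end
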